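/- arXiv:1802.09372 — 2 statements merged into one kernel-verified Lean document; each statement's English description precedes it below -/
import Mathlib

section
/- Suppose ω : {0,…,p−2} → ℤ≥0 is antipalindromic, with range {0,1,…,ζ}. Then the two maps Γ** → ℤ^ℕ given by x ↦ (φ_ω(S^j x))_{j≥0} and x ↦ (ζ − φ_ω(S^{−j} x))_{j≥0} have the same distribution, i.e., the pushforwards of λ under these two maps are equal as measures on ℤ^ℕ. -/
/-!
Let `Q` (`reflect`) keep the initial run of digits `p - 1`, send the first other digit `d` to
`p - 2 - d` and every later digit `e` to `p - 1 - e`. On `Γ**` both `S ∘ Q` and `Q ∘ S⁻¹` are the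
digitwise complement `e ↦ p - 1 - e`, so `S^j ∘ Q = Q ∘ S^{-j}`; and `φ_ω ∘ Q = ζ - φ_ω` because `ω`
is antipalindromic. Hence `(φ_ω(S^j (Q x)))_j = (ζ - φ_ω(S^{-j} x))_j`, and it remains to see that
`Q` preserves `λ`. Realizing `λ` as the law of the digits of a uniform point of `[0,1)`, the points
whose expansion starts with exactly `k` digits `p - 1` form `[1 - p^{-k}, 1 - p^{-k-1})`, and `Q`
is induced by reflecting each of these intervals about its midpoint.
-/

open MeasureTheory
open scoped NNReal ENNReal

namespace Chacon

/-- The space of digit sequences with digits in `{0, …, p-1}`. -/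
def Gamma (p : ℕ) : Set (ℕ → ℕ) := {x | ∀ i, x i < p}

/-- `Γ*`: sequences with digits `< p` having infinitely many coordinates `≠ p - 1`. -/
def GammaStar (p : ℕ) : Set (ℕ → ℕ) :=
  {x | (∀ i, x i < p) ∧ {i | x i ≠ p - 1}.Infinite}

/-- The least index `i` with `x i ≠ p - 1`. -/
noncomputable def firstNot (p : ℕ) (x : ℕ → ℕ) : ℕ :=
  sInf {i | x i ≠ p - 1}

/-- `φ(x) = x_i` where `i` is the least index with `x_i ≠ p - 1`. -/
noncomputable def phi (p : ℕ) (x : ℕ → ℕ) : ℕ :=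
  x (firstNot p x)

/-- The odometer `S` (addition of `1` with carry): the initial run of digits
`p - 1` is replaced by zeros, and the first digit `≠ p - 1` is increased by one. -/
noncomputable def odo (p : ℕ) (x : ℕ → ℕ) : ℕ → ℕ :=
  fun i =>
    if i < firstNot p x then 0
    else if i = firstNot p x then x i + 1
    else x i

/-- `φ^(m)(x) = ∑_{j=0}^{m-1} φ(S^j x)`. -/
noncomputable def phiSum (p m : ℕ) (x : ℕ → ℕ) : ℕ :=
  ∑ j ∈ Finset.range m, phi p ((odo p)^[j] x)

/-- The base-`p` digit sequence of a real number `u`. -/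
noncomputable def digitsOf (p : ℕ) (u : ℝ) : ℕ → ℕ :=
  fun i => (⌊u * (p : ℝ) ^ (i + 1)⌋).toNat % p

/-- `λ`: the product probability measure on digit sequences under which the
coordinates are i.i.d., uniformly distributed in `{0, …, p-1}`; it is realized
concretely as the distribution of the base-`p` digit sequence of a uniformly
distributed random point of `[0,1)`. -/
noncomputable def lam (p : ℕ) : Measure (ℕ → ℕ) :=
  Measure.map (digitsOf p) (volume.restrict (Set.Ico (0 : ℝ) 1))

/-- `π_m(j) = λ({x : φ^(m)(x) = j})`. -/
noncomputable def pim (p m j : ℕ) : ℝ≥0∞ :=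
  lam p {x | phiSum p m x = j}

/-- `P_m^p(t) = ∑_{j ≥ 0} π_m(j) t^j`, a real polynomial
(the sum is over `0 ≤ j ≤ m (p-2)` since `0 ≤ φ^(m) ≤ m (p-2)` a.s.). -/
noncomputable def P (p m : ℕ) (t : ℝ) : ℝ :=
  ∑ j ∈ Finset.range (m * (p - 2) + 1), (pim p m j).toReal * t ^ j

/-- The `n`-th triangular number `Δ_n = n (n+1) / 2`. -/
def tri (n : ℕ) : ℕ := n * (n + 1) / 2

/-- The degree `D_m` of `P_m^p`: the largest `j` with `π_m(j) ≠ 0`. -/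
noncomputable def D (p m : ℕ) : ℕ := sSup {j | pim p m j ≠ 0}

/-- The lower degree `d_m` of `P_m^p`: the least `j` with `π_m(j) ≠ 0`. -/
noncomputable def d (p m : ℕ) : ℕ := sInf {j | pim p m j ≠ 0}


/-- `φ_ω(x) = ω(x_i)` where `i` is the least index with `x_i ≠ p - 1`. -/
noncomputable def phiOmega (p : ℕ) (ω : ℕ → ℕ) (x : ℕ → ℕ) : ℕ :=
  ω (x (firstNot p x))

/-- `φ_ω^(m)(x) = ∑_{j=0}^{m-1} φ_ω(S^j x)`. -/
noncomputable def phiOmegaSum (p : ℕ) (ω : ℕ → ℕ) (m : ℕ) (x : ℕ → ℕ) : ℕ :=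
  ∑ j ∈ Finset.range m, phiOmega p ω ((odo p)^[j] x)

/-- `π_m^ω(j) = λ({x : φ_ω^(m)(x) = j})`. -/
noncomputable def pimOmega (p : ℕ) (ω : ℕ → ℕ) (m j : ℕ) : ℝ≥0∞ :=
  lam p {x | phiOmegaSum p ω m x = j}

/-- `ω : {0, …, p-2} → ℤ≥0` is antipalindromic with range exactly `{0, 1, …, ζ}`
and `ω j = ζ - ω (p - 2 - j)` for all `0 ≤ j ≤ p - 2`. -/
def Antipalindromic (p ζ : ℕ) (ω : ℕ → ℕ) : Prop :=
  (∀ j, j ≤ p - 2 → ω j ≤ ζ) ∧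
  (∀ v, v ≤ ζ → ∃ j, j ≤ p - 2 ∧ ω j = v) ∧
  (∀ j, j ≤ p - 2 → ω j + ω (p - 2 - j) = ζ)

/-- `Γ**`: sequences with digits `< p` having infinitely many coordinates `≠ p - 1`
and infinitely many coordinates `≠ 0`. -/
def GammaStarStar (p : ℕ) : Set (ℕ → ℕ) :=
  {x | (∀ i, x i < p) ∧ {i | x i ≠ p - 1}.Infinite ∧ {i | x i ≠ 0}.Infinite}

/-- The least index `i` with `x i ≠ 0`. -/
noncomputable def firstNotZero (p : ℕ) (x : ℕ → ℕ) : ℕ := sInf {i | x i ≠ 0}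

/-- The inverse odometer `S⁻¹` (subtraction of `1` with borrow): the initial run
of zeros is replaced by `p-1`'s and the first digit `≠ 0` is decreased by one. -/
noncomputable def odoInv (p : ℕ) (x : ℕ → ℕ) : ℕ → ℕ :=
  fun i =>
    if i < firstNotZero p x then p - 1
    else if i = firstNotZero p x then x i - 1
    else x i

section Sequences

variable {p : ℕ} {x : ℕ → ℕ}

noncomputable def reflect (p : ℕ) (x : ℕ → ℕ) : ℕ → ℕ :=
  fun i =>
    if i < firstNot p x then p - 1
    else if i = firstNot p x then p - 2 - x i
    else p - 1 - x i

def digitCompl (p : ℕ) (x : ℕ → ℕ) : ℕ → ℕ := fun i => p - 1 - x i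

lemma apply_firstNot_ne (hx : ∃ i, x i ≠ p - 1) : x (firstNot p x) ≠ p - 1 :=
  Nat.sInf_mem hx

lemma apply_of_lt_firstNot {i : ℕ} (hi : i < firstNot p x) : x i = p - 1 :=
  not_not.1 (Nat.notMem_of_lt_sInf hi)

lemma firstNot_eq {j : ℕ} (hj : x j ≠ p - 1) (hlt : ∀ i < j, x i = p - 1) :
    firstNot p x = j :=
  le_antisymm (Nat.sInf_le hj) (not_lt.1 fun h => apply_firstNot_ne ⟨j, hj⟩ (hlt _ h))

lemma apply_firstNotZero_ne (hx : ∃ i, x i ≠ 0) : x (firstNotZero p x) ≠ 0 :=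
  Nat.sInf_mem hx

lemma apply_of_lt_firstNotZero {i : ℕ} (hi : i < firstNotZero p x) : x i = 0 :=
  not_not.1 (Nat.notMem_of_lt_sInf hi)

lemma infinite_setOf_ne_of_eq_of_lt {y : ℕ → ℕ} {c n : ℕ} (hx : {i | x i ≠ c}.Infinite)
    (hxy : ∀ i, n < i → y i = x i) : {i | y i ≠ c}.Infinite :=
  (hx.sdiff (Set.finite_Iic n)).mono fun i hi => by
    show y i ≠ c
    rw [hxy i (not_le.1 hi.2)]
    exact hi.1

lemma odoInv_mem_GammaStarStar (hx : x ∈ GammaStarStar p) : odoInv p x ∈ GammaStarStar p := by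
  obtain ⟨hlt, hinf, hinf₀⟩ := hx
  have htail : ∀ i, firstNotZero p x < i → odoInv p x i = x i := fun i hi => by
    simp [odoInv, hi.ne', hi.not_gt]
  refine ⟨fun i => ?_, infinite_setOf_ne_of_eq_of_lt hinf htail,
    infinite_setOf_ne_of_eq_of_lt hinf₀ htail⟩
  have := hlt i
  unfold odoInv
  split_ifs <;> omega

lemma odoInv_iterate_mem_GammaStarStar (hx : x ∈ GammaStarStar p) (j : ℕ) :
    (odoInv p)^[j] x ∈ GammaStarStar p := by
  induction j with
  | zero => exact hx
  | succ j ih => rw [Function.iterate_succ_apply']; exact odoInv_mem_GammaStarStar ih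

lemma firstNot_reflect (hlt : ∀ i, x i < p) (hx : ∃ i, x i ≠ p - 1) :
    firstNot p (reflect p x) = firstNot p x := by
  refine firstNot_eq ?_ fun i hi => by simp [reflect, hi]
  have := hlt (firstNot p x)
  have := apply_firstNot_ne hx
  simp only [reflect, lt_irrefl, if_false, if_true]
  omega

lemma odo_reflect (hlt : ∀ i, x i < p) (hx : ∃ i, x i ≠ p - 1) :
    odo p (reflect p x) = digitCompl p x := by
  funext i
  have := hlt i
  rcases lt_trichotomy i (firstNot p x) with hi | rfl | hi
  · simp [odo, digitCompl, firstNot_reflect hlt hx, hi, apply_of_lt_firstNot hi]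
  · have := apply_firstNot_ne hx
    simp only [odo, reflect, digitCompl, firstNot_reflect hlt hx, lt_irrefl, if_false, if_true]
    omega
  · simp [odo, reflect, digitCompl, firstNot_reflect hlt hx, hi.ne', hi.not_gt]

lemma reflect_odoInv (hlt : ∀ i, x i < p) (hx : ∃ i, x i ≠ 0) :
    reflect p (odoInv p x) = digitCompl p x := by
  have hx₀ := apply_firstNotZero_ne (p := p) hx
  have hfirst : firstNot p (odoInv p x) = firstNotZero p x := by
    refine firstNot_eq ?_ fun i hi => by simp [odoInv, hi]
    have := hlt (firstNotZero p x)
    simp only [odoInv, lt_irrefl, if_false, if_true]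
    omega
  funext i
  have := hlt i
  rcases lt_trichotomy i (firstNotZero p x) with hi | rfl | hi
  · simp [reflect, digitCompl, hfirst, hi, apply_of_lt_firstNotZero hi]
  · simp only [reflect, odoInv, digitCompl, hfirst, lt_irrefl, if_false, if_true]
    omega
  · simp [reflect, odoInv, digitCompl, hfirst, hi.ne', hi.not_gt]

lemma odo_iterate_reflect (hx : x ∈ GammaStarStar p) (j : ℕ) :
    (odo p)^[j] (reflect p x) = reflect p ((odoInv p)^[j] x) := by
  induction j with
  | zero => rfl
  | succ j ih =>
    obtain ⟨hlt, hinf, hinf₀⟩ := odoInv_iterate_mem_GammaStarStar hx j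
    rw [Function.iterate_succ_apply', ih, odo_reflect hlt hinf.nonempty,
      Function.iterate_succ_apply', reflect_odoInv hlt hinf₀.nonempty]

lemma phiOmega_reflect_add {ζ : ℕ} {ω : ℕ → ℕ} (hω : ∀ j ≤ p - 2, ω j + ω (p - 2 - j) = ζ)
    (hlt : ∀ i, x i < p) (hx : ∃ i, x i ≠ p - 1) :
    phiOmega p ω (reflect p x) + phiOmega p ω x = ζ := by
  have := hlt (firstNot p x)
  have := apply_firstNot_ne hx
  have hsymm := hω (x (firstNot p x)) (by omega)
  simp only [phiOmega, firstNot_reflect hlt hx, reflect, lt_irrefl, if_false, if_true]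
  omega

end Sequences

section Digits

variable {p : ℕ} {u : ℝ}

lemma digitsOf_lt (hp : 0 < p) (u : ℝ) (i : ℕ) : digitsOf p u i < p :=
  Nat.mod_lt _ hp

lemma digitsOf_eq_emod (hu : 0 ≤ u) (i : ℕ) :
    (digitsOf p u i : ℤ) = ⌊u * (p : ℝ) ^ (i + 1)⌋ % p := by
  rw [digitsOf, Int.natCast_mod, Int.toNat_of_nonneg (Int.floor_nonneg.2 (by positivity))]

lemma intCast_floor_eq_digitsOf (hu : 0 ≤ u) (i : ℕ) :
    ((⌊u * (p : ℝ) ^ (i + 1)⌋ : ℤ) : ZMod p) = digitsOf p u i := by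
  rw [← ZMod.intCast_mod, ← digitsOf_eq_emod hu, Int.cast_natCast]

lemma digitsOf_eq_of_intCast_floor (hu : 0 ≤ u) {i t : ℕ} (ht : t < p)
    (h : ((⌊u * (p : ℝ) ^ (i + 1)⌋ : ℤ) : ZMod p) = t) : digitsOf p u i = t := by
  have := (ZMod.natCast_eq_natCast_iff' _ _ _).1 ((intCast_floor_eq_digitsOf hu i).symm.trans h)
  rwa [Nat.mod_eq_of_lt (digitsOf_lt (by omega) u i), Nat.mod_eq_of_lt ht] at this

lemma floor_mul_pow_succ (hp : 0 < p) (hu : 0 ≤ u) (n : ℕ) :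
    ⌊u * (p : ℝ) ^ (n + 1)⌋ = p * ⌊u * (p : ℝ) ^ n⌋ + digitsOf p u n := by
  have hdiv : ⌊u * (p : ℝ) ^ n⌋ = ⌊u * (p : ℝ) ^ (n + 1)⌋ / p := by
    rw [← Int.floor_div_natCast, pow_succ, ← mul_assoc, mul_div_cancel_right₀ _ (by positivity)]
  rw [hdiv, digitsOf_eq_emod hu, Int.mul_ediv_add_emod]

noncomputable def edge (p k : ℕ) : ℝ := 1 - ((p : ℝ) ^ k)⁻¹

lemma edge_mul_pow_of_le (hp : 0 < p) {k n : ℕ} (h : k ≤ n) :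
    edge p k * (p : ℝ) ^ n = (p : ℝ) ^ n - (p : ℝ) ^ (n - k) := by
  obtain ⟨m, rfl⟩ := Nat.exists_eq_add_of_le h
  have : (p : ℝ) ^ k ≠ 0 := by positivity
  simp only [edge, pow_add, Nat.add_sub_cancel_left]
  field_simp

lemma edge_mul_pow (hp : 0 < p) (k : ℕ) : edge p k * (p : ℝ) ^ k = (p : ℝ) ^ k - 1 := by
  rw [edge_mul_pow_of_le hp le_rfl, Nat.sub_self, pow_zero]

lemma monotone_edge (hp : 0 < p) : Monotone (edge p) := fun j k h => by
  have : (1 : ℝ) ≤ p := by exact_mod_cast hp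
  unfold edge
  gcongr

lemma edge_nonneg (hp : 0 < p) (k : ℕ) : 0 ≤ edge p k := by
  simpa [edge] using monotone_edge hp (Nat.zero_le k)

lemma edge_lt_one (hp : 0 < p) (k : ℕ) : edge p k < 1 := by
  unfold edge
  have : (0 : ℝ) < ((p : ℝ) ^ k)⁻¹ := by positivity
  linarith

lemma exists_lt_edge (hp : 2 ≤ p) (hu : u < 1) : ∃ k, u < edge p k := by
  obtain ⟨k, hk⟩ := exists_pow_lt_of_lt_one (sub_pos.2 hu) (inv_lt_one_of_one_lt₀
    (by exact_mod_cast hp : (1 : ℝ) < p))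
  exact ⟨k, by rw [edge, ← inv_pow]; linarith⟩

lemma exists_mem_Ico_edge (hp : 2 ≤ p) (hu : 0 ≤ u) (hu1 : u < 1) :
    ∃ k, u ∈ Set.Ico (edge p k) (edge p (k + 1)) := by
  classical
  have hex := exists_lt_edge hp hu1
  have hpos : Nat.find hex ≠ 0 := fun h => by
    have := Nat.find_spec hex
    rw [h] at this
    simp [edge] at this
    linarith
  obtain ⟨k, hk⟩ := Nat.exists_eq_succ_of_ne_zero hpos
  refine ⟨k, not_lt.1 (Nat.find_min hex (by omega)), ?_⟩
  rw [← Nat.succ_eq_add_one, ← hk]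
  exact Nat.find_spec hex

lemma iUnion_Ico_edge (hp : 2 ≤ p) :
    ⋃ k, Set.Ico (edge p k) (edge p (k + 1)) = Set.Ico 0 1 := by
  ext u
  simp only [Set.mem_iUnion]
  refine ⟨fun ⟨k, hk⟩ => ⟨(edge_nonneg (by omega) k).trans hk.1,
    hk.2.trans (edge_lt_one (by omega) _)⟩, fun hu => exists_mem_Ico_edge hp hu.1 hu.2⟩

lemma floor_mul_pow_of_edge_le (hp : 0 < p) {k : ℕ} (h1 : edge p k ≤ u) (h2 : u < 1) :
    ⌊u * (p : ℝ) ^ k⌋ = (p : ℤ) ^ k - 1 := by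
  have hedge := edge_mul_pow hp k
  have : (0 : ℝ) < (p : ℝ) ^ k := by positivity
  rw [Int.floor_eq_iff]
  push_cast
  constructor
  · rw [← hedge]; gcongr
  · nlinarith

lemma digitsOf_of_lt_of_edge_le (hp : 0 < p) {k i : ℕ} (h1 : edge p k ≤ u) (h2 : u < 1)
    (hi : i < k) : digitsOf p u i = p - 1 := by
  have h1' := (monotone_edge hp (Nat.succ_le_of_lt hi)).trans h1
  refine digitsOf_eq_of_intCast_floor ((edge_nonneg hp _).trans h1') (by omega) ?_
  rw [floor_mul_pow_of_edge_le hp h1' h2]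
  simp [Nat.cast_sub (Nat.one_le_of_lt hp)]

lemma digitsOf_ne_pred_of_lt_edge (hp : 0 < p) {k : ℕ} (h1 : edge p k ≤ u)
    (h2 : u < edge p (k + 1)) : digitsOf p u k ≠ p - 1 := by
  intro hk
  have hfloor := floor_mul_pow_succ hp ((edge_nonneg hp k).trans h1) k
  rw [floor_mul_pow_of_edge_le hp h1 (h2.trans (edge_lt_one hp _)), hk] at hfloor
  have hedge := edge_mul_pow hp (k + 1)
  have hlt : u * (p : ℝ) ^ (k + 1) < (p : ℝ) ^ (k + 1) - 1 := by
    rw [← hedge]; gcongr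
  have hle := Int.floor_le (u * (p : ℝ) ^ (k + 1))
  rw [hfloor] at hle
  push_cast [Nat.cast_sub (Nat.one_le_of_lt hp)] at hle
  linarith [pow_succ (p : ℝ) k]

lemma firstNot_digitsOf (hp : 0 < p) {k : ℕ} (h1 : edge p k ≤ u) (h2 : u < edge p (k + 1)) :
    firstNot p (digitsOf p u) = k :=
  firstNot_eq (digitsOf_ne_pred_of_lt_edge hp h1 h2)
    fun _ hi => digitsOf_of_lt_of_edge_le hp h1 (h2.trans (edge_lt_one hp _)) hi

def terminatingReals (p : ℕ) : Set ℝ :=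
  {u | ∃ n : ℕ, u * (p : ℝ) ^ n ∈ Set.range ((↑) : ℤ → ℝ)}

lemma countable_terminatingReals (hp : 0 < p) : (terminatingReals p).Countable :=
  (Set.countable_range fun q : ℕ × ℤ => (q.2 : ℝ) / (p : ℝ) ^ q.1).mono
    fun u ⟨n, hn⟩ => by
      obtain ⟨m, hm⟩ := hn
      exact ⟨(n, m), by field_simp; linarith⟩

lemma edge_mem_terminatingReals (hp : 0 < p) (k : ℕ) : edge p k ∈ terminatingReals p := by
  refine ⟨k, (p : ℤ) ^ k - 1, ?_⟩
  rw [edge_mul_pow hp]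
  push_cast
  rfl

lemma nonpos_of_forall_pow_mul_le_one {q t : ℝ} (hq : 1 < q) (h : ∀ j : ℕ, q ^ j * t ≤ 1) :
    t ≤ 0 := by
  by_contra! ht
  obtain ⟨j, hj⟩ := pow_unbounded_of_one_lt t⁻¹ hq
  have := h j
  rw [inv_lt_iff_one_lt_mul₀ ht] at hj
  linarith

lemma exists_forall_ge_eq_of_not_infinite {f : ℕ → ℕ} {c : ℕ} (h : ¬{i | f i ≠ c}.Infinite) :
    ∃ N, ∀ i ≥ N, f i = c := by
  simpa [← Nat.frequently_atTop_iff_infinite, Filter.not_frequently,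
    Filter.eventually_atTop] using h

lemma infinite_setOf_digitsOf_ne_pred (hp : 2 ≤ p) (hu : 0 ≤ u) :
    {i | digitsOf p u i ≠ p - 1}.Infinite := by
  by_contra hfin
  obtain ⟨N, hN⟩ := exists_forall_ge_eq_of_not_infinite hfin
  have key : ∀ j, ⌊u * (p : ℝ) ^ (N + j)⌋ + 1 = p ^ j * (⌊u * (p : ℝ) ^ N⌋ + 1) := by
    intro j
    induction j with
    | zero => simp
    | succ j ih =>
      rw [← add_assoc, floor_mul_pow_succ (by omega) hu, hN _ (by omega),
        Nat.cast_sub (by omega)]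
      linear_combination (p : ℤ) * ih
  have := nonpos_of_forall_pow_mul_le_one (t := ⌊u * (p : ℝ) ^ N⌋ + 1 - u * (p : ℝ) ^ N)
    (q := p) (by exact_mod_cast hp) fun j => by
      have hj := congrArg (fun z : ℤ => (z : ℝ)) (key j)
      push_cast at hj
      have hpow : u * (p : ℝ) ^ (N + j) = (p : ℝ) ^ j * (u * (p : ℝ) ^ N) := by ring
      linarith [Int.floor_le (u * (p : ℝ) ^ (N + j))]
  linarith [Int.lt_floor_add_one (u * (p : ℝ) ^ N)]

lemma infinite_setOf_digitsOf_ne_zero (hp : 2 ≤ p) (hu : 0 ≤ u)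
    (hq : u ∉ terminatingReals p) : {i | digitsOf p u i ≠ 0}.Infinite := by
  by_contra hfin
  obtain ⟨N, hN⟩ := exists_forall_ge_eq_of_not_infinite hfin
  have key : ∀ j, ⌊u * (p : ℝ) ^ (N + j)⌋ = p ^ j * ⌊u * (p : ℝ) ^ N⌋ := by
    intro j
    induction j with
    | zero => simp
    | succ j ih =>
      rw [← add_assoc, floor_mul_pow_succ (by omega) hu, hN _ (by omega), ih]
      ring
  have := nonpos_of_forall_pow_mul_le_one (t := u * (p : ℝ) ^ N - ⌊u * (p : ℝ) ^ N⌋)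
    (q := p) (by exact_mod_cast hp) fun j => by
      have hj := congrArg (fun z : ℤ => (z : ℝ)) (key j)
      push_cast at hj
      have hpow : u * (p : ℝ) ^ (N + j) = (p : ℝ) ^ j * (u * (p : ℝ) ^ N) := by ring
      linarith [Int.lt_floor_add_one (u * (p : ℝ) ^ (N + j))]
  exact hq ⟨N, ⌊u * (p : ℝ) ^ N⌋, by linarith [Int.floor_le (u * (p : ℝ) ^ N)]⟩

lemma digitsOf_mem_GammaStarStar (hp : 2 ≤ p) (hu : 0 ≤ u) (hq : u ∉ terminatingReals p) :
    digitsOf p u ∈ GammaStarStar p :=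
  ⟨digitsOf_lt (by omega) u, infinite_setOf_digitsOf_ne_pred hp hu,
    infinite_setOf_digitsOf_ne_zero hp hu hq⟩

end Digits

section Fold

variable {p : ℕ} {u : ℝ}

lemma floor_intCast_sub (N : ℤ) {w : ℝ} (hw : w ∉ Set.range ((↑) : ℤ → ℝ)) :
    ⌊(N : ℝ) - w⌋ = N - ⌊w⌋ - 1 := by
  rw [sub_eq_neg_add, Int.floor_add_intCast, Int.floor_neg,
    (Int.ceil_eq_floor_add_one_iff_notMem w).2 hw]
  ring

lemma floor_edge_add_edge_sub_mul_pow (hp : 0 < p) (hq : u ∉ terminatingReals p) {k i : ℕ}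
    (hik : k ≤ i) :
    ⌊(edge p k + edge p (k + 1) - u) * (p : ℝ) ^ (i + 1)⌋ =
      2 * (p : ℤ) ^ (i + 1) - (p : ℤ) ^ (i + 1 - k) - (p : ℤ) ^ (i - k) -
        ⌊u * (p : ℝ) ^ (i + 1)⌋ - 1 := by
  have hk := edge_mul_pow_of_le hp (show k ≤ i + 1 by omega)
  have hk1 := edge_mul_pow_of_le hp (show k + 1 ≤ i + 1 by omega)
  rw [Nat.add_sub_add_right] at hk1
  have : (edge p k + edge p (k + 1) - u) * (p : ℝ) ^ (i + 1) =
      ((2 * (p : ℤ) ^ (i + 1) - (p : ℤ) ^ (i + 1 - k) - (p : ℤ) ^ (i - k) : ℤ) : ℝ) -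
        u * (p : ℝ) ^ (i + 1) := by
    push_cast
    linear_combination hk + hk1
  rw [this, floor_intCast_sub _ fun h => hq ⟨i + 1, h⟩]

lemma digitsOf_edge_add_edge_sub (hp : 2 ≤ p) {k : ℕ} (h1 : edge p k < u)
    (h2 : u < edge p (k + 1)) (hq : u ∉ terminatingReals p) :
    digitsOf p (edge p k + edge p (k + 1) - u) = reflect p (digitsOf p u) := by
  have hp0 : 0 < p := by omega
  have hu : 0 ≤ u := (edge_nonneg hp0 k).trans h1.le
  have hv1 : edge p k ≤ edge p k + edge p (k + 1) - u := by linarith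
  have hv2 : edge p k + edge p (k + 1) - u < edge p (k + 1) := by linarith
  have hv : 0 ≤ edge p k + edge p (k + 1) - u := (edge_nonneg hp0 k).trans hv1
  have hpz : ((p : ℕ) : ZMod p) = 0 := ZMod.natCast_self p
  funext i
  have hd := digitsOf_lt hp0 u i
  rw [reflect, firstNot_digitsOf hp0 h1.le h2]
  rcases lt_trichotomy i k with hi | rfl | hi
  · rw [if_pos hi]
    exact digitsOf_of_lt_of_edge_le hp0 hv1 (hv2.trans (edge_lt_one hp0 _)) hi
  · have hne := digitsOf_ne_pred_of_lt_edge hp0 h1.le h2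
    rw [if_neg (lt_irrefl _), if_pos rfl]
    refine digitsOf_eq_of_intCast_floor hv (by omega) ?_
    rw [floor_edge_add_edge_sub_mul_pow hp0 hq le_rfl]
    push_cast [intCast_floor_eq_digitsOf hu, Nat.cast_sub (show digitsOf p u i ≤ p - 2 by omega),
      Nat.cast_sub hp, Nat.add_sub_cancel_left, Nat.sub_self, hpz]
    ring
  · rw [if_neg (by omega), if_neg hi.ne']
    refine digitsOf_eq_of_intCast_floor hv (by omega) ?_
    rw [floor_edge_add_edge_sub_mul_pow hp0 hq hi.le]
    obtain ⟨m, hm⟩ : ∃ m, i - k = m + 1 := ⟨i - k - 1, by omega⟩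
    rw [show i + 1 - k = m + 2 by omega, hm]
    push_cast [intCast_floor_eq_digitsOf hu, Nat.cast_sub (show digitsOf p u i ≤ p - 1 by omega),
      Nat.cast_sub hp0, hpz]
    ring

end Fold

section Measurability

variable {p : ℕ}

lemma measurable_sInf_setOf {α : Type*} [MeasurableSpace α] {P : ℕ → α → Prop}
    (hP : ∀ i, MeasurableSet {x | P i x}) : Measurable fun x => sInf {i | P i x} := by
  refine measurable_to_countable' fun n => ?_
  have : (fun x => sInf {i | P i x}) ⁻¹' {n} =
      ({x | P n x} ∩ ⋂ i < n, {x | P i x}ᶜ) ∪ {_x | n = 0} ∩ ⋂ i, {x | P i x}ᶜ := by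
    ext x
    simp only [Set.mem_preimage, Set.mem_singleton_iff, Set.mem_union, Set.mem_inter_iff,
      Set.mem_iInter, Set.mem_compl_iff, Set.mem_ofPred_eq]
    constructor
    · rintro rfl
      by_cases hne : ∃ i, P i x
      · exact .inl ⟨Nat.sInf_mem hne, fun i hi => Nat.notMem_of_lt_sInf hi⟩
      · push Not at hne
        exact .inr ⟨by simp [hne], hne⟩
    · rintro (⟨hn, hlt⟩ | ⟨rfl, hnone⟩)
      · exact le_antisymm (Nat.sInf_le hn)
          (not_lt.1 fun h => hlt _ h (Nat.sInf_mem (s := {i | P i x}) ⟨n, hn⟩))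
      · simp [hnone]
  rw [this]
  exact ((hP n).inter (.biInter (Set.to_countable _) fun i _ => (hP i).compl)).union
    ((MeasurableSet.const _).inter (.iInter fun i => (hP i).compl))

lemma measurable_firstNot : Measurable (firstNot p) :=
  measurable_sInf_setOf fun i => (measurableSet_singleton (p - 1)).compl.preimage
    (measurable_pi_apply i)

lemma measurable_odo : Measurable (odo p) :=
  measurable_pi_lambda _ fun i =>
    (measurable_of_countable fun q : ℕ × ℕ =>
      if i < q.1 then 0 else if i = q.1 then q.2 + 1 else q.2).comp
    (measurable_firstNot.prodMk (measurable_pi_apply i))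

lemma measurable_reflect : Measurable (reflect p) :=
  measurable_pi_lambda _ fun i =>
    (measurable_of_countable fun q : ℕ × ℕ =>
      if i < q.1 then p - 1 else if i = q.1 then p - 2 - q.2 else p - 1 - q.2).comp
    (measurable_firstNot.prodMk (measurable_pi_apply i))

lemma measurable_phiOmega (ω : ℕ → ℕ) : Measurable (phiOmega p ω) :=
  (measurable_from_prod_countable_left (f := fun q : (ℕ → ℕ) × ℕ => ω (q.1 q.2))
    fun n => (measurable_of_countable ω).comp (measurable_pi_apply n)).comp
    (measurable_id.prodMk measurable_firstNot)

lemma measurableSet_setOf_infinite_ne (c : ℕ) :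
    MeasurableSet {x : ℕ → ℕ | {i | x i ≠ c}.Infinite} := by
  simp_rw [← Nat.frequently_atTop_iff_infinite, Filter.frequently_atTop]
  exact (Measurable.forall fun _ => .exists fun i => measurable_const.and
    ((measurable_of_countable (· ≠ c)).comp (measurable_pi_apply i))).setOf

lemma measurableSet_GammaStarStar : MeasurableSet (GammaStarStar p) := by
  refine MeasurableSet.inter ?_ ((measurableSet_setOf_infinite_ne _).inter
    (measurableSet_setOf_infinite_ne _))
  exact (Measurable.forall fun i =>
    (measurable_of_countable (· < p)).comp (measurable_pi_apply i)).setOf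

lemma measurable_digitsOf : Measurable (digitsOf p) :=
  measurable_pi_lambda _ fun _ => (measurable_of_countable fun z : ℤ => z.toNat % p).comp
    (Int.measurable_floor.comp (measurable_id.mul_const _))

end Measurability

section Measure

open Set

variable {p : ℕ}

lemma map_const_add_sub_restrict_Ico (a b : ℝ) :
    (volume.restrict (Ico a b)).map (fun u => a + b - u) = volume.restrict (Ico a b) := by
  have hpre : (fun u => a + b - u) ⁻¹' Ioc a b = Ico a b := by
    ext u
    simp only [mem_preimage, mem_Ioc, mem_Ico]
    constructor <;> rintro ⟨h1, h2⟩ <;> constructor <;> linarith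
  have := (Measure.measurePreserving_sub_left volume (a + b)).restrict_preimage
    (measurableSet_Ioc (a := a) (b := b))
  rw [hpre] at this
  rw [this.map_eq, Measure.restrict_congr_set Ico_ae_eq_Ioc]

noncomputable def fold (p : ℕ) (u : ℝ) : ℝ :=
  edge p (firstNot p (digitsOf p u)) + edge p (firstNot p (digitsOf p u) + 1) - u

lemma fold_eq (hp : 0 < p) {k : ℕ} {u : ℝ} (hu : u ∈ Ico (edge p k) (edge p (k + 1))) :
    fold p u = edge p k + edge p (k + 1) - u := by
  rw [fold, firstNot_digitsOf hp hu.1 hu.2]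

lemma measurable_fold : Measurable (fold p) :=
  ((measurable_of_countable fun k => edge p k + edge p (k + 1)).comp
    (measurable_firstNot.comp measurable_digitsOf)).sub measurable_id

lemma map_fold_restrict_Ico (hp : 2 ≤ p) :
    (volume.restrict (Ico 0 1)).map (fold p) = volume.restrict (Ico (0 : ℝ) 1) := by
  have hdisj : Pairwise (Function.onFun Disjoint fun k => Ico (edge p k) (edge p (k + 1))) := by
    simpa using (monotone_edge (p := p) (by omega)).pairwise_disjoint_on_Ico_succ
  rw [← iUnion_Ico_edge hp, Measure.restrict_iUnion hdisj fun _ => measurableSet_Ico,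
    Measure.map_sum measurable_fold.aemeasurable]
  congr 1
  funext k
  rw [Measure.map_congr ((ae_restrict_mem measurableSet_Ico).mono fun u hu =>
    fold_eq (by omega) hu), map_const_add_sub_restrict_Ico]

lemma ae_mem_Ico_notMem_terminatingReals (hp : 0 < p) :
    ∀ᵐ u ∂volume.restrict (Ico (0 : ℝ) 1), u ∈ Ico 0 1 ∧ u ∉ terminatingReals p :=
  (ae_restrict_mem measurableSet_Ico).and
    (ae_restrict_of_ae ((countable_terminatingReals hp).ae_notMem volume))

lemma ae_lam_mem_GammaStarStar (hp : 2 ≤ p) : ∀ᵐ x ∂lam p, x ∈ GammaStarStar p := by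
  refine (ae_map_iff (p := (· ∈ GammaStarStar p)) measurable_digitsOf.aemeasurable
    measurableSet_GammaStarStar).2 ?_
  exact (ae_mem_Ico_notMem_terminatingReals (by omega)).mono fun u hu =>
    digitsOf_mem_GammaStarStar hp hu.1.1 hu.2

lemma digitsOf_fold (hp : 2 ≤ p) {u : ℝ} (hu : u ∈ Ico 0 1) (hq : u ∉ terminatingReals p) :
    digitsOf p (fold p u) = reflect p (digitsOf p u) := by
  obtain ⟨k, hk⟩ := exists_mem_Ico_edge hp hu.1 hu.2
  have hk' : edge p k < u :=
    hk.1.lt_of_ne fun h => hq (h ▸ edge_mem_terminatingReals (by omega) k)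
  rw [fold_eq (by omega) hk, digitsOf_edge_add_edge_sub hp hk' hk.2 hq]

lemma measurePreserving_reflect (hp : 2 ≤ p) : MeasurePreserving (reflect p) (lam p) (lam p) := by
  refine ⟨measurable_reflect, ?_⟩
  calc (lam p).map (reflect p)
      = (volume.restrict (Ico 0 1)).map (reflect p ∘ digitsOf p) :=
        Measure.map_map measurable_reflect measurable_digitsOf
    _ = (volume.restrict (Ico 0 1)).map (digitsOf p ∘ fold p) :=
        Measure.map_congr ((ae_mem_Ico_notMem_terminatingReals (by omega)).mono fun u hu =>
          (digitsOf_fold hp hu.1 hu.2).symm)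
    _ = lam p := by
        rw [← Measure.map_map measurable_digitsOf measurable_fold, map_fold_restrict_Ico hp, lam]

end Measure

/-- if `ω` is antipalindromic with range `{0, …, ζ}`, then the maps
`x ↦ (φ_ω(S^j x))_{j ≥ 0}` and `x ↦ (ζ - φ_ω(S^{-j} x))_{j ≥ 0}` have the same
distribution: the pushforwards of `λ` under them are equal as measures on `ℤ^ℕ`. -/
theorem statement_1 (p : ℕ) (hp : 3 ≤ p) (ζ : ℕ) (ω : ℕ → ℕ)
    (hω : Antipalindromic p ζ ω) :
    Measure.map (fun x : ℕ → ℕ => fun j : ℕ => (phiOmega p ω ((odo p)^[j] x) : ℤ))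
        (lam p) =
      Measure.map
        (fun x : ℕ → ℕ => fun j : ℕ => (ζ : ℤ) - (phiOmega p ω ((odoInv p)^[j] x) : ℤ))
        (lam p) := by
  have hp2 : 2 ≤ p := by omega
  have hmeas : Measurable fun x : ℕ → ℕ => fun j : ℕ => (phiOmega p ω ((odo p)^[j] x) : ℤ) :=
    measurable_pi_lambda _ fun j => (measurable_of_countable ((↑) : ℕ → ℤ)).comp
      ((measurable_phiOmega ω).comp (measurable_odo.iterate j))
  have hconj : ∀ᵐ x ∂lam p,
      (fun j : ℕ => (phiOmega p ω ((odo p)^[j] (reflect p x)) : ℤ)) =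
        fun j : ℕ => (ζ : ℤ) - (phiOmega p ω ((odoInv p)^[j] x) : ℤ) :=
    (ae_lam_mem_GammaStarStar hp2).mono fun x hx => funext fun j => by
      obtain ⟨hlt, hinf, -⟩ := odoInv_iterate_mem_GammaStarStar hx j
      have := phiOmega_reflect_add hω.2.2 hlt hinf.nonempty
      rw [odo_iterate_reflect hx]
      omega
  conv_lhs =>
    rw [← (measurePreserving_reflect hp2).map_eq, Measure.map_map hmeas measurable_reflect]
  exact Measure.map_congr hconj

end Chacon
end

section
/- For every x ∈ Γ* and every m ≥ 0, one has φ^(pm)(x) = m·Δ_{p−2} + φ^(m)(σx), where σ : Γ* → Γ* is the shift σ(x_0,x_1,x_2,…) = (x_1,x_2,…). -/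
open MeasureTheory
open scoped NNReal ENNReal

namespace Chacon

/-- The shift `σ(x_0, x_1, x_2, …) = (x_1, x_2, …)`. -/
def shift (x : ℕ → ℕ) : ℕ → ℕ := fun i => x (i + 1)

section Aux

variable {p : ℕ}

lemma star_nonempty {x : ℕ → ℕ} (hx : x ∈ GammaStar p) :
    {i | x i ≠ p - 1}.Nonempty := hx.2.nonempty

lemma firstNot_spec {x : ℕ → ℕ} (hx : x ∈ GammaStar p) :
    x (firstNot p x) ≠ p - 1 := Nat.sInf_mem (star_nonempty hx)

lemma firstNot_zero {x : ℕ → ℕ} (h : x 0 ≠ p - 1) : firstNot p x = 0 :=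
  Nat.sInf_eq_zero.mpr (Or.inl h)

lemma phi_of_ne {x : ℕ → ℕ} (h : x 0 ≠ p - 1) : phi p x = x 0 := by
  rw [phi, firstNot_zero h]

lemma odo_zero_of_ne {x : ℕ → ℕ} (h : x 0 ≠ p - 1) : odo p x 0 = x 0 + 1 := by
  simp [odo, firstNot_zero h]

lemma shift_odo_of_ne {x : ℕ → ℕ} (h : x 0 ≠ p - 1) : shift (odo p x) = shift x := by
  funext j
  simp [shift, odo, firstNot_zero h]

lemma firstNot_pos {x : ℕ → ℕ} (hx : x ∈ GammaStar p) (h : x 0 = p - 1) :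
    0 < firstNot p x := by
  rcases Nat.eq_zero_or_pos (firstNot p x) with h0 | h0
  · exact absurd (h0 ▸ firstNot_spec hx) (not_not.mpr h)
  · exact h0

lemma firstNot_shift {x : ℕ → ℕ} (hx : x ∈ GammaStar p) (h : x 0 = p - 1) :
    firstNot p (shift x) + 1 = firstNot p x := by
  set i := firstNot p x with hi
  have hpos : 0 < i := firstNot_pos hx h
  have hmem : i - 1 ∈ {j | shift x j ≠ p - 1} := by
    simp only [Set.mem_setOf_eq, shift]
    rw [Nat.sub_add_cancel hpos]
    exact firstNot_spec hx
  have h1 : firstNot p (shift x) ≤ i - 1 := Nat.sInf_le hmem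
  have h2 : i - 1 ≤ firstNot p (shift x) := by
    apply le_csInf ⟨_, hmem⟩
    intro b hb
    have : i ≤ b + 1 := Nat.sInf_le hb
    omega
  omega

lemma phi_carry {x : ℕ → ℕ} (hx : x ∈ GammaStar p) (h : x 0 = p - 1) :
    phi p x = phi p (shift x) := by
  have := firstNot_shift hx h
  rw [phi, phi, ← this]
  rfl

lemma odo_zero_carry {x : ℕ → ℕ} (hx : x ∈ GammaStar p) (h : x 0 = p - 1) :
    odo p x 0 = 0 := by
  simp [odo, firstNot_pos hx h]

lemma shift_odo_carry {x : ℕ → ℕ} (hx : x ∈ GammaStar p) (h : x 0 = p - 1) :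
    shift (odo p x) = odo p (shift x) := by
  have hfs := firstNot_shift hx h
  have hpos := firstNot_pos hx h
  funext j
  simp only [shift, odo]
  have e1 : (j + 1 < firstNot p x) ↔ (j < firstNot p (shift x)) := by omega
  have e2 : (j + 1 = firstNot p x) ↔ (j = firstNot p (shift x)) := by omega
  by_cases h1 : j < firstNot p (shift x)
  · rw [if_pos (e1.mpr h1), if_pos h1]
  · rw [if_neg (fun hc => h1 (e1.mp hc)), if_neg h1]
    by_cases h2 : j = firstNot p (shift x)
    · rw [if_pos (e2.mpr h2), if_pos h2]
    · rw [if_neg (fun hc => h2 (e2.mp hc)), if_neg h2]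

lemma odo_star (hp : 3 ≤ p) {x : ℕ → ℕ} (hx : x ∈ GammaStar p) :
    odo p x ∈ GammaStar p := by
  constructor
  · intro i
    simp only [odo]
    split_ifs with h1 h2
    · omega
    · have h3 : x i < p := hx.1 i
      have h4 : x i ≠ p - 1 := h2 ▸ firstNot_spec hx
      omega
    · exact hx.1 i
  · refine Set.Infinite.mono ?_ (hx.2.diff (Set.finite_le_nat (firstNot p x)))
    intro i hi
    simp only [Set.mem_diff, Set.mem_setOf_eq, not_le] at hi
    simp only [Set.mem_setOf_eq, odo]
    rw [if_neg (by omega), if_neg (by omega)]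
    exact hi.1

lemma iterate_star (hp : 3 ≤ p) {x : ℕ → ℕ} (hx : x ∈ GammaStar p) (k : ℕ) :
    (odo p)^[k] x ∈ GammaStar p := by
  induction k with
  | zero => exact hx
  | succ n ih => rw [Function.iterate_succ_apply']; exact odo_star hp ih

lemma phiSum_add (p m k : ℕ) (x : ℕ → ℕ) :
    phiSum p (m + k) x = phiSum p m x + phiSum p k ((odo p)^[m] x) := by
  rw [phiSum, phiSum, phiSum, Finset.sum_range_add]
  congr 1
  refine Finset.sum_congr rfl fun j _ => ?_
  rw [Nat.add_comm m j, Function.iterate_add_apply]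

/-- Increment run: `k` pure increment steps. -/
lemma run_incr (hp : 3 ≤ p) :
    ∀ (k : ℕ) (x : ℕ → ℕ), x ∈ GammaStar p → x 0 + k ≤ p - 1 →
      phiSum p k x = ∑ j ∈ Finset.range k, (x 0 + j) ∧
      ((odo p)^[k] x) 0 = x 0 + k ∧ shift ((odo p)^[k] x) = shift x := by
  intro k
  induction k with
  | zero => intro x hx _; exact ⟨by simp [phiSum], by simp, rfl⟩
  | succ n ih =>
    intro x hx hle
    have hne : x 0 ≠ p - 1 := by omega
    have hx' := odo_star hp hx
    have h0 : odo p x 0 = x 0 + 1 := odo_zero_of_ne hne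
    have hsh : shift (odo p x) = shift x := shift_odo_of_ne hne
    obtain ⟨hs, hz, hsft⟩ := ih (odo p x) hx' (by omega)
    refine ⟨?_, ?_, ?_⟩
    · rw [phiSum, Finset.sum_range_succ' (fun j => phi p ((odo p)^[j] x)) n]
      simp only [Function.iterate_succ_apply, Function.iterate_zero_apply]
      rw [show (∑ j ∈ Finset.range n, phi p ((odo p)^[j] (odo p x))) = phiSum p n (odo p x) from rfl,
        hs, phi_of_ne hne, h0,
        Finset.sum_range_succ' (fun j => x 0 + j) n]
      simp [Nat.add_comm, Nat.add_assoc, Nat.add_left_comm]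
    · rw [Function.iterate_succ_apply]
      omega
    · rw [Function.iterate_succ_apply, hsft]
      exact hsh

/-- Carry run: `n` increments followed by one carry step. -/
lemma run_carry (hp : 3 ≤ p) :
    ∀ (n : ℕ) (y : ℕ → ℕ), y ∈ GammaStar p → y 0 + n + 1 = p →
      phiSum p (n + 1) y = (∑ j ∈ Finset.range n, (y 0 + j)) + phi p (shift y) ∧
      ((odo p)^[n + 1] y) 0 = 0 ∧ shift ((odo p)^[n + 1] y) = odo p (shift y) := by
  intro n
  induction n with
  | zero =>
    intro y hy h
    have h0 : y 0 = p - 1 := by omega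
    refine ⟨?_, ?_, ?_⟩
    · rw [phiSum]; simp [phi_carry hy h0]
    · simpa using odo_zero_carry hy h0
    · simpa using shift_odo_carry hy h0
  | succ n ih =>
    intro y hy h
    have hne : y 0 ≠ p - 1 := by omega
    have hy' := odo_star hp hy
    have h0 : odo p y 0 = y 0 + 1 := odo_zero_of_ne hne
    have hsh : shift (odo p y) = shift y := shift_odo_of_ne hne
    obtain ⟨hs, hz, hsft⟩ := ih (odo p y) hy' (by omega)
    refine ⟨?_, ?_, ?_⟩
    · rw [phiSum, Finset.sum_range_succ' (fun j => phi p ((odo p)^[j] y)) (n + 1)]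
      simp only [Function.iterate_succ_apply, Function.iterate_zero_apply]
      rw [show (∑ j ∈ Finset.range (n+1), phi p ((odo p)^[j] (odo p y))) = phiSum p (n+1) (odo p y) from rfl,
        hs, phi_of_ne hne, h0, hsh,
        Finset.sum_range_succ' (fun j => y 0 + j) n]
      simp [Nat.add_comm, Nat.add_assoc, Nat.add_left_comm]
    · rw [show n + 1 + 1 = (n + 1) + 1 from rfl, Function.iterate_succ_apply]
      exact hz
    · rw [Function.iterate_succ_apply, hsft, hsh]

lemma tri_eq_sum (n : ℕ) : tri n = ∑ j ∈ Finset.range (n + 1), j := by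
  have h := Finset.sum_range_id_mul_two (n + 1)
  have h2 : (n + 1) * (n + 1 - 1) = n * (n + 1) := by
    simp [Nat.mul_comm]
  rw [tri]
  omega

/-- The block lemma: one full block of `p` odometer steps. -/
lemma block (hp : 3 ≤ p) {y : ℕ → ℕ} (hy : y ∈ GammaStar p) :
    phiSum p p y = tri (p - 2) + phi p (shift y) ∧
    shift ((odo p)^[p] y) = odo p (shift y) := by
  have halt : y 0 < p := hy.1 0
  set a := y 0 with ha
  set n := p - 1 - a with hn
  have hsum : a + n + 1 = p := by omega
  obtain ⟨hs1, hz1, hsft1⟩ := run_carry hp n y hy hsum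
  set z := (odo p)^[n + 1] y with hzdef
  have hz : z ∈ GammaStar p := iterate_star hp hy (n + 1)
  obtain ⟨hs2, -, hsft2⟩ := run_incr hp a z hz (by omega)
  have hsplit := phiSum_add p (n + 1) a y
  rw [show n + 1 + a = p by omega] at hsplit
  have hiter := Function.iterate_add_apply (odo p) a (n + 1) y
  rw [show a + (n + 1) = p by omega] at hiter
  constructor
  · rw [hsplit, hs1, hs2, hz1]
    have key : (∑ j ∈ Finset.range n, (y 0 + j)) + (∑ j ∈ Finset.range a, (0 + j))
        = tri (p - 2) := by
      rw [tri_eq_sum]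
      have hpe : p - 2 + 1 = a + n := by omega
      rw [hpe, Finset.sum_range_add]
      simp only [zero_add, ← ha]
      omega
    omega
  · rw [hiter, ← hzdef, hsft2]
    exact hsft1

lemma shift_iterate (hp : 3 ≤ p) {x : ℕ → ℕ} (hx : x ∈ GammaStar p) (m : ℕ) :
    shift ((odo p)^[p * m] x) = (odo p)^[m] (shift x) := by
  induction m with
  | zero => simp
  | succ n ih =>
    have hmem : (odo p)^[p * n] x ∈ GammaStar p := iterate_star hp hx _
    rw [show p * (n + 1) = p + p * n by ring, Function.iterate_add_apply,
      (block hp hmem).2, ih]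
    exact (Function.iterate_succ_apply' (odo p) n (shift x)).symm

end Aux

/-- for every `x ∈ Γ*` and every `m ≥ 0`,
`φ^(pm)(x) = m Δ_{p-2} + φ^(m)(σ x)`. -/
theorem statement_5 (p : ℕ) (hp : 3 ≤ p) (x : ℕ → ℕ) (hx : x ∈ GammaStar p) (m : ℕ) :
    phiSum p (p * m) x = m * tri (p - 2) + phiSum p m (shift x) := by
  induction m with
  | zero => simp [phiSum]
  | succ n ih =>
    have hmem : (odo p)^[p * n] x ∈ GammaStar p := iterate_star hp hx _
    rw [show p * (n + 1) = p * n + p by ring, phiSum_add, ih, (block hp hmem).1,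
      shift_iterate hp hx n]
    have hexp : phiSum p (n + 1) (shift x)
        = phiSum p n (shift x) + phi p ((odo p)^[n] (shift x)) := by
      rw [phiSum, phiSum, Finset.sum_range_succ]
    rw [hexp]
    ring

end Chacon
end
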